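/- Let X ≥ 2 be an integer, let U be a real number with U ≥ X, and let t be any real number. Then X^U·(1 − X/(U+1)) ≤ |F_X(−U + it)| ≤ X^U·(1 + X/(U+1)); in particular F_X(−U + it) ≠ 0. -/

import Mathlib

/-!
On the line `Re s = -U` the terms `n ^ (-s)` have modulus `n ^ U`, so the last term `X ^ (-s)`
dominates: the others have total modulus at most
`∑_{n < X} n ^ U ≤ ∫₁^X x ^ U dx ≤ X ^ (U + 1) / (U + 1)`,
which is a fraction `X / (U + 1) < 1` of `X ^ U` once `U ≥ X`.
-/

/-- The partial sum of the Riemann zeta-function: `F_X(s) = ∑_{n ≤ X} n^{-s}`. -/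
noncomputable def FX (X : ℝ) (s : ℂ) : ℂ :=
  ∑ n ∈ Finset.Icc 1 ⌊X⌋₊, (n : ℂ) ^ (-s)

open Finset

lemma sum_Ico_one_rpow_le {X : ℕ} (hX : 1 ≤ X) {U : ℝ} (hU : 0 ≤ U) :
    ∑ n ∈ Ico 1 X, (n : ℝ) ^ U ≤ (X : ℝ) ^ U * (X / (U + 1)) := by
  have hmono : MonotoneOn (fun x : ℝ ↦ x ^ U) (Set.Icc ((1 : ℕ) : ℝ) X) :=
    fun a ha b _ hab ↦ Real.rpow_le_rpow (zero_le_one.trans (by simpa using ha.1)) hab hU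
  have hU1 : 0 < U + 1 := by linarith
  calc ∑ n ∈ Ico 1 X, (n : ℝ) ^ U ≤ ∫ x in ((1 : ℕ) : ℝ)..X, x ^ U :=
      hmono.sum_le_integral_Ico hX
    _ = ((X : ℝ) ^ (U + 1) - 1) / (U + 1) := by
      rw [Nat.cast_one, integral_rpow (Or.inl (by linarith)), Real.one_rpow]
    _ ≤ (X : ℝ) ^ (U + 1) / (U + 1) := by gcongr; linarith
    _ = (X : ℝ) ^ U * (X / (U + 1)) := by
      rw [Real.rpow_add_one (by positivity), mul_div_assoc]

lemma FX_natCast_eq_add {X : ℕ} (hX : 1 ≤ X) (s : ℂ) :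
    FX X s = ∑ n ∈ Ico 1 X, (n : ℂ) ^ (-s) + (X : ℂ) ^ (-s) := by
  rw [FX, Nat.floor_natCast, Icc_eq_cons_Ico hX, sum_cons, add_comm]

lemma abs_norm_FX_sub_rpow_le {X : ℕ} (hX : 1 ≤ X) {U : ℝ} (hU : 0 ≤ U) {s : ℂ}
    (hs : s.re = -U) : |‖FX X s‖ - (X : ℝ) ^ U| ≤ (X : ℝ) ^ U * (X / (U + 1)) := by
  have hnorm : ∀ n : ℕ, 1 ≤ n → ‖(n : ℂ) ^ (-s)‖ = (n : ℝ) ^ U := fun n hn ↦ by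
    rw [Complex.norm_natCast_cpow_of_pos hn, Complex.neg_re, hs, neg_neg]
  calc |‖FX X s‖ - (X : ℝ) ^ U|
      = |‖FX X s‖ - ‖(X : ℂ) ^ (-s)‖| := by rw [hnorm X hX]
    _ ≤ ‖FX X s - (X : ℂ) ^ (-s)‖ := abs_norm_sub_norm_le _ _
    _ = ‖∑ n ∈ Ico 1 X, (n : ℂ) ^ (-s)‖ := by
      rw [FX_natCast_eq_add hX, add_sub_cancel_right]
    _ ≤ ∑ n ∈ Ico 1 X, ‖(n : ℂ) ^ (-s)‖ := norm_sum_le _ _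
    _ = ∑ n ∈ Ico 1 X, (n : ℝ) ^ U := sum_congr rfl fun n hn ↦ hnorm n (mem_Ico.mp hn).1
    _ ≤ (X : ℝ) ^ U * (X / (U + 1)) := sum_Ico_one_rpow_le hX hU

theorem stmt_15 (X : ℕ) (hX : 2 ≤ X) (U : ℝ) (hU : (X : ℝ) ≤ U) (t : ℝ) :
    (X : ℝ) ^ U * (1 - X / (U + 1)) ≤ ‖FX X (-U + t * Complex.I)‖ ∧
    ‖FX X (-U + t * Complex.I)‖ ≤ (X : ℝ) ^ U * (1 + X / (U + 1)) ∧
    FX X (-U + t * Complex.I) ≠ 0 := by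
  have hX0 : (0 : ℝ) < X := by exact_mod_cast (by omega : 0 < X)
  have hU0 : 0 ≤ U := hX0.le.trans hU
  obtain ⟨hupper, hlower⟩ := abs_sub_le_iff.mp <|
    abs_norm_FX_sub_rpow_le (X := X) (by omega) hU0 (s := -U + t * Complex.I) (by simp)
  have hratio : (X : ℝ) / (U + 1) < 1 := (div_lt_one (by linarith)).mpr (by linarith)
  have hpos : 0 < (X : ℝ) ^ U * (1 - X / (U + 1)) :=
    mul_pos (Real.rpow_pos_of_pos hX0 U) (by linarith)
  refine ⟨by linarith, by linarith, fun h ↦ ?_⟩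
  rw [h, norm_zero] at hlower
  linarith
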